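/- Let G(x) = sin(π(i−x))/sin(π(i+x)). There is a constant C > 0 such that |1 − G(x)| ≤ C·min{1, |x|} for every complex x with Im x ≥ 0. Consequently, for every complex x with Im x ≥ 0 the infinite product Δ(x) = ∏_{j ≥ 1} G(2^{−j} x) converges, and Δ(2^n x) → 1 as the integer n → −∞. -/

import Mathlib

/-!
By the addition formula, `1 - G x = 2 cosh π · sin (π x) / sin (π (i + x))`. Since
`|sin z|² = sin² (Re z) + sinh² (Im z)`, on the closed upper half plane the denominator has modulus
at least `sinh π` and dominates `|sin (π (i - x))|`; so `|1 - G x| ≲ |x|` for `|x| ≤ 1`, and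
`|1 - G x| ≤ 2` because `|G x| ≤ 1`. The factors of `Δ (2ⁿ x)` then satisfy
`|1 - G (2^(n-j-1) x)| ≲ 2^(-j) |x|` uniformly in `n ≤ 0`: this summable bound gives the
convergence of the product, and dominated convergence for infinite products gives `Δ (2ⁿ x) → 1`.
-/

open Complex Real Filter Topology

namespace Complex

theorem norm_sin_sq (z : ℂ) : ‖sin z‖ ^ 2 = Real.sin z.re ^ 2 + Real.sinh z.im ^ 2 := by
  rw [Complex.sq_norm, sin_eq, ← ofReal_sin, ← ofReal_cos, ← ofReal_sinh, ← ofReal_cosh,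
    ← ofReal_mul, ← ofReal_mul, normSq_add_mul_I]
  linear_combination Real.sin z.re ^ 2 * Real.cosh_sq z.im +
    Real.sinh z.im ^ 2 * Real.sin_sq_add_cos_sq z.re

theorem norm_cos_sq (z : ℂ) : ‖cos z‖ ^ 2 = Real.cos z.re ^ 2 + Real.sinh z.im ^ 2 := by
  rw [Complex.sq_norm, cos_eq, ← ofReal_sin, ← ofReal_cos, ← ofReal_sinh, ← ofReal_cosh,
    ← ofReal_mul, ← ofReal_mul, sub_eq_add_neg, neg_mul_eq_neg_mul, ← ofReal_neg,
    normSq_add_mul_I]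
  linear_combination Real.cos z.re ^ 2 * Real.cosh_sq z.im +
    Real.sinh z.im ^ 2 * Real.sin_sq_add_cos_sq z.re

theorem norm_cos_le_cosh_im (z : ℂ) : ‖cos z‖ ≤ Real.cosh z.im := by
  refine (pow_le_pow_iff_left₀ (norm_nonneg _) (Real.cosh_pos _).le two_ne_zero).1 ?_
  rw [norm_cos_sq, Real.cosh_sq']
  linarith [Real.cos_sq_le_one z.re]

theorem norm_sin_le_cosh_mul {r : ℝ} {z : ℂ} (hz : ‖z‖ ≤ r) : ‖sin z‖ ≤ Real.cosh r * ‖z‖ := by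
  have hcos : ∀ w ∈ Metric.closedBall (0 : ℂ) r, ‖cos w‖ ≤ Real.cosh r := fun w hw ↦
    (norm_cos_le_cosh_im w).trans <| Real.cosh_le_cosh.2 <|
      (abs_im_le_norm w).trans <| (mem_closedBall_zero_iff.1 hw).trans (le_abs_self r)
  simpa using (convex_closedBall (0 : ℂ) r).norm_image_sub_le_of_norm_hasDerivWithin_le
    (fun w _ ↦ (hasDerivAt_sin w).hasDerivWithinAt) hcos
    (Metric.mem_closedBall_self ((norm_nonneg z).trans hz)) (mem_closedBall_zero_iff.2 hz)

theorem abs_sinh_im_le_norm_sin (z : ℂ) : |Real.sinh z.im| ≤ ‖sin z‖ := by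
  refine abs_le_of_sq_le_sq ?_ (norm_nonneg _)
  rw [norm_sin_sq]
  exact le_add_of_nonneg_left (sq_nonneg _)

theorem norm_sin_le_norm_sin {a b : ℂ} (hre : |Real.sin a.re| ≤ |Real.sin b.re|)
    (him : |a.im| ≤ |b.im|) : ‖sin a‖ ≤ ‖sin b‖ := by
  refine (pow_le_pow_iff_left₀ (norm_nonneg _) (norm_nonneg _) two_ne_zero).1 ?_
  rw [norm_sin_sq, norm_sin_sq]
  gcongr ?_ + ?_
  · exact sq_le_sq.2 hre
  · exact sq_le_sq.2 (by rwa [Real.abs_sinh, Real.abs_sinh, Real.sinh_le_sinh])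

end Complex

noncomputable def blaschkeFactor (x : ℂ) : ℂ :=
  Complex.sin ((π : ℂ) * (I - x)) / Complex.sin ((π : ℂ) * (I + x))

theorem sinh_pi_le_norm_sin_pi_mul_I_add {x : ℂ} (hx : 0 ≤ x.im) :
    Real.sinh π ≤ ‖Complex.sin ((π : ℂ) * (I + x))‖ := by
  refine le_trans ?_ (abs_sinh_im_le_norm_sin _)
  have him : ((π : ℂ) * (I + x)).im = π * (1 + x.im) := by simp [mul_im]
  rw [Real.abs_sinh, Real.sinh_le_sinh, him, abs_of_nonneg (by positivity)]
  exact le_mul_of_one_le_right pi_pos.le (by linarith)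

theorem sin_pi_mul_I_add_ne_zero {x : ℂ} (hx : 0 ≤ x.im) :
    Complex.sin ((π : ℂ) * (I + x)) ≠ 0 :=
  norm_pos_iff.1 <| (Real.sinh_pos_iff.2 pi_pos).trans_le (sinh_pi_le_norm_sin_pi_mul_I_add hx)

theorem norm_blaschkeFactor_le_one {x : ℂ} (hx : 0 ≤ x.im) : ‖blaschkeFactor x‖ ≤ 1 := by
  rw [blaschkeFactor, norm_div]
  refine div_le_one_of_le₀ (norm_sin_le_norm_sin ?_ ?_) (norm_nonneg _)
  · simp [mul_re]
  · simp only [mul_im, ofReal_re, ofReal_im, add_im, sub_im, I_im, zero_mul, add_zero]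
    rw [abs_mul, abs_mul, abs_of_nonneg (by linarith : 0 ≤ 1 + x.im)]
    exact mul_le_mul_of_nonneg_left (abs_le.2 ⟨by linarith, by linarith⟩) (abs_nonneg _)

theorem one_sub_blaschkeFactor {x : ℂ} (hx : 0 ≤ x.im) :
    1 - blaschkeFactor x =
      2 * Complex.cosh π * Complex.sin (π * x) / Complex.sin ((π : ℂ) * (I + x)) := by
  have h := sin_pi_mul_I_add_ne_zero hx
  rw [blaschkeFactor, eq_div_iff h, sub_mul, one_mul, div_mul_cancel₀ _ h, mul_add, mul_sub,
    Complex.sin_add, Complex.sin_sub, ← Complex.cos_mul_I]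
  ring

theorem norm_one_sub_blaschkeFactor_le_mul_norm {x : ℂ} (hx : 0 ≤ x.im) (hx1 : ‖x‖ ≤ 1) :
    ‖1 - blaschkeFactor x‖ ≤ 2 * π * Real.cosh π ^ 2 / Real.sinh π * ‖x‖ := by
  have hsin : ‖Complex.sin (π * x)‖ ≤ Real.cosh π * (π * ‖x‖) := by
    have hπx : ‖(π : ℂ) * x‖ = π * ‖x‖ := by simp [abs_of_pos pi_pos]
    rw [← hπx]
    exact norm_sin_le_cosh_mul (by rw [hπx]; exact mul_le_of_le_one_right pi_pos.le hx1)
  have hcosh : ‖Complex.cosh π‖ = Real.cosh π := by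
    rw [← ofReal_cosh, norm_real, Real.norm_of_nonneg (Real.cosh_pos π).le]
  rw [one_sub_blaschkeFactor hx, norm_div, norm_mul, norm_mul, hcosh, Complex.norm_two]
  calc 2 * Real.cosh π * ‖Complex.sin (π * x)‖ / ‖Complex.sin ((π : ℂ) * (I + x))‖
      ≤ 2 * Real.cosh π * (Real.cosh π * (π * ‖x‖)) / Real.sinh π := by
        gcongr
        exact sinh_pi_le_norm_sin_pi_mul_I_add hx
    _ = 2 * π * Real.cosh π ^ 2 / Real.sinh π * ‖x‖ := by ring

theorem norm_one_sub_blaschkeFactor_le {x : ℂ} (hx : 0 ≤ x.im) :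
    ‖1 - blaschkeFactor x‖ ≤ max 2 (2 * π * Real.cosh π ^ 2 / Real.sinh π) * min 1 ‖x‖ := by
  rcases le_total ‖x‖ 1 with hx1 | hx1
  · rw [min_eq_right hx1]
    exact (norm_one_sub_blaschkeFactor_le_mul_norm hx hx1).trans <|
      mul_le_mul_of_nonneg_right (le_max_right _ _) (norm_nonneg x)
  · rw [min_eq_left hx1, mul_one]
    calc ‖1 - blaschkeFactor x‖ ≤ ‖(1 : ℂ)‖ + ‖blaschkeFactor x‖ := norm_sub_le _ _
      _ ≤ 2 := by linarith [norm_one (α := ℂ), norm_blaschkeFactor_le_one hx]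
      _ ≤ _ := le_max_left _ _

section InfiniteProduct

variable {ι R : Type*} [NormedCommRing R] [NormOneClass R] [CompleteSpace R]

theorem multipliable_of_norm_one_sub_le {f : ι → R} {b : ι → ℝ} (hb : Summable b)
    (hf : ∀ i, ‖1 - f i‖ ≤ b i) : Multipliable f := by
  simpa using multipliable_one_add_of_summable (f := fun i ↦ f i - 1) <|
    hb.of_nonneg_of_le (fun _ ↦ norm_nonneg _) fun i ↦ (norm_sub_rev _ _).trans_le (hf i)

theorem tendsto_tprod_nhds_one_of_dominated {α : Type*} {l : Filter α} {F : α → ι → R}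
    {b : ι → ℝ} (hb : Summable b) (hF : ∀ i, Tendsto (F · i) l (𝓝 1))
    (hFb : ∀ᶠ a in l, ∀ i, ‖1 - F a i‖ ≤ b i) :
    Tendsto (fun a ↦ ∏' i, F a i) l (𝓝 1) := by
  simpa using tendsto_tprod_one_add_of_dominated_convergence (f := fun a i ↦ F a i - 1)
    (g := 0) hb (fun i ↦ by simpa using (hF i).sub_const 1)
    (hFb.mono fun a ha i ↦ (norm_sub_rev _ _).trans_le (ha i))

end InfiniteProduct

theorem tendsto_two_zpow_atBot : Tendsto (fun n : ℤ ↦ (2 : ℂ) ^ n) atBot (𝓝 0) := by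
  rw [tendsto_zero_iff_norm_tendsto_zero]
  have := (tendsto_rpow_atBot_of_base_gt_one 2 one_lt_two).comp
    (tendsto_intCast_atBot_iff.2 tendsto_id)
  simpa [Function.comp_def, Real.rpow_intCast] using this

theorem im_two_zpow_mul (n : ℤ) (x : ℂ) : ((2 : ℂ) ^ n * x).im = 2 ^ n * x.im := by
  rw [show (2 : ℂ) ^ n = ((2 : ℝ) ^ n : ℝ) by push_cast; rfl, im_ofReal_mul]

theorem im_two_zpow_mul_nonneg (n : ℤ) {x : ℂ} (hx : 0 ≤ x.im) : 0 ≤ ((2 : ℂ) ^ n * x).im := by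
  rw [im_two_zpow_mul]
  positivity

theorem norm_two_zpow_neg_sub_one_mul (j : ℕ) (x : ℂ) :
    ‖(2 : ℂ) ^ (-(j : ℤ) - 1) * x‖ = ‖x‖ / 2 * (1 / 2) ^ j := by
  rw [norm_mul, norm_zpow, Complex.norm_two, zpow_sub₀ two_ne_zero, zpow_neg, zpow_natCast,
    one_div, inv_pow]
  field_simp

section DyadicProduct

variable {g : ℂ → ℂ} {C : ℝ}

theorem multipliable_comp_two_zpow_neg_sub_one_mul
    (hg : ∀ y : ℂ, 0 ≤ y.im → ‖1 - g y‖ ≤ C * ‖y‖) {x : ℂ} (hx : 0 ≤ x.im) :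
    Multipliable fun j : ℕ ↦ g ((2 : ℂ) ^ (-(j : ℤ) - 1) * x) :=
  multipliable_of_norm_one_sub_le ((summable_geometric_two.mul_left (‖x‖ / 2)).mul_left C)
    fun j ↦ (hg _ (im_two_zpow_mul_nonneg _ hx)).trans_eq <| by
      rw [norm_two_zpow_neg_sub_one_mul]

theorem tendsto_tprod_comp_two_zpow_neg_sub_one_mul_atBot (hC : 0 ≤ C)
    (hg : ∀ y : ℂ, 0 ≤ y.im → ‖1 - g y‖ ≤ C * ‖y‖) {x : ℂ} (hx : 0 ≤ x.im) :
    Tendsto (fun n : ℤ ↦ ∏' j : ℕ, g ((2 : ℂ) ^ (-(j : ℤ) - 1) * ((2 : ℂ) ^ n * x)))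
      atBot (𝓝 1) := by
  have hg' : ∀ (j : ℕ) (n : ℤ), ‖1 - g ((2 : ℂ) ^ (-(j : ℤ) - 1) * ((2 : ℂ) ^ n * x))‖ ≤
      C * ‖(2 : ℂ) ^ (-(j : ℤ) - 1) * ((2 : ℂ) ^ n * x)‖ := fun j n ↦
    hg _ (im_two_zpow_mul_nonneg _ (im_two_zpow_mul_nonneg _ hx))
  refine tendsto_tprod_nhds_one_of_dominated
    ((summable_geometric_two.mul_left (‖x‖ / 2)).mul_left C) (fun j ↦ ?_) ?_
  · have hy : Tendsto (fun n : ℤ ↦ (2 : ℂ) ^ (-(j : ℤ) - 1) * ((2 : ℂ) ^ n * x)) atBot (𝓝 0) := by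
      simpa using (tendsto_two_zpow_atBot.mul_const x).const_mul ((2 : ℂ) ^ (-(j : ℤ) - 1))
    rw [tendsto_iff_norm_sub_tendsto_zero]
    refine squeeze_zero (fun _ ↦ norm_nonneg _) (fun n ↦ (norm_sub_rev _ _).trans_le (hg' j n)) ?_
    simpa using (tendsto_norm_zero.comp hy).const_mul C
  · filter_upwards [eventually_le_atBot 0] with n hn j
    refine (hg' j n).trans (mul_le_mul_of_nonneg_left ?_ hC)
    rw [norm_two_zpow_neg_sub_one_mul, norm_mul, norm_zpow, Complex.norm_two]
    gcongr
    exact mul_le_of_le_one_left (norm_nonneg x) (zpow_le_one_of_nonpos₀ one_le_two hn)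

end DyadicProduct

/-- With `G(x) = sin(π(i−x))/sin(π(i+x))`, there is `C > 0` with
`|1 − G(x)| ≤ C·min{1,|x|}` on the closed upper half plane; consequently, for `Im x ≥ 0` the
product `Δ(x) = ∏_{j≥1} G(2^{−j}x)` converges, and `Δ(2^n x) → 1` as `n → −∞`. -/
theorem delta_product_converges (G : ℂ → ℂ)
    (hG : ∀ x : ℂ, G x = Complex.sin ((π : ℂ) * (I - x)) / Complex.sin ((π : ℂ) * (I + x))) :
    ∃ C > (0 : ℝ),
      (∀ x : ℂ, 0 ≤ x.im → ‖1 - G x‖ ≤ C * min 1 ‖x‖) ∧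
      (∀ x : ℂ, 0 ≤ x.im → Multipliable (fun j : ℕ => G ((2 : ℂ) ^ (-(j : ℤ) - 1) * x))) ∧
      (∀ x : ℂ, 0 ≤ x.im →
        Tendsto (fun n : ℤ =>
            ∏' j : ℕ, G ((2 : ℂ) ^ (-(j : ℤ) - 1) * ((2 : ℂ) ^ n * x)))
          atBot (nhds 1)) := by
  obtain rfl : G = blaschkeFactor := funext hG
  set C := max 2 (2 * π * Real.cosh π ^ 2 / Real.sinh π)
  have hC : 0 < C := lt_max_of_lt_left two_pos
  have hlin : ∀ y : ℂ, 0 ≤ y.im → ‖1 - blaschkeFactor y‖ ≤ C * ‖y‖ := fun y hy ↦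
    (norm_one_sub_blaschkeFactor_le hy).trans (mul_le_mul_of_nonneg_left (min_le_right _ _) hC.le)
  exact ⟨C, hC, fun x hx ↦ norm_one_sub_blaschkeFactor_le hx,
    fun x hx ↦ multipliable_comp_two_zpow_neg_sub_one_mul hlin hx,
    fun x hx ↦ tendsto_tprod_comp_two_zpow_neg_sub_one_mul_atBot hC.le hlin hx⟩
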